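/- Let F : ℝⁿ × ℝⁿ → ℝⁿ be a continuously differentiable force and define R(q,v) = ∫₀¹ ⟨F(q, s·v), v⟩ ds. Then the force G : ℝⁿ × ℝⁿ → ℝⁿ defined by G(q,v) = F(q,v) − ∇ᵥR(q,v) is gyroscopic, i.e. ⟨G(q,v), v⟩ = 0 for all (q,v) ∈ ℝⁿ × ℝⁿ. -/

import Mathlib

/-!
Along a ray the Rayleigh-type function is a primitive: `R(q, t•v) = ∫₀ᵗ ⟪F(q, u•v), v⟫ du`
after substituting `u = s t`. Hence the derivative of `R(q, ·)` at `v` in the direction `v` is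
`⟪F(q, v), v⟫`, which is `⟪∇ᵥR(q, v), v⟫` once `R(q, ·)` is known to be differentiable; that is
where `F ∈ C¹` enters, through differentiation under the integral sign.
-/

open RealInnerProductSpace Filter Topology Set

theorem hasFDerivAt_intervalIntegral_of_contDiff {H E : Type*} [NormedAddCommGroup H]
    [NormedSpace ℝ H] [NormedAddCommGroup E] [NormedSpace ℝ E] {g : H × ℝ → E}
    (hg : ContDiff ℝ 1 g) (a b : ℝ) (x₀ : H) :
    HasFDerivAt (fun x => ∫ t in a..b, g (x, t))
      (∫ t in a..b, fderiv ℝ g (x₀, t) ∘L ContinuousLinearMap.inl ℝ H ℝ) x₀ := by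
  set g' : H × ℝ → H →L[ℝ] E := fun p => fderiv ℝ g p ∘L ContinuousLinearMap.inl ℝ H ℝ
  have hg'_cont : Continuous g' := (hg.continuous_fderiv one_ne_zero).clm_comp continuous_const
  obtain ⟨M, hM⟩ : ∃ M, ∀ t ∈ uIcc a b, ‖g' (x₀, t)‖ ≤ M :=
    isCompact_uIcc.exists_bound_of_continuousOn (by fun_prop)
  -- tube lemma: the bound `M + 1` holds uniformly in `t` on a neighbourhood of `x₀`
  have h_near : ∀ᶠ x in 𝓝 x₀, ∀ t ∈ uIcc a b, ‖g' (x, t)‖ < M + 1 :=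
    isCompact_uIcc.eventually_forall_of_forall_eventually fun t ht =>
      hg'_cont.norm.continuousAt.eventually_lt continuousAt_const (by linarith [hM t ht])
  refine intervalIntegral.hasFDerivAt_integral_of_dominated_of_fderiv_le
    (F := fun x t => g (x, t)) (F' := fun x t => g' (x, t)) (bound := fun _ => M + 1) h_near
    ?_ ?_ ?_ ?_ intervalIntegrable_const ?_
  · exact Eventually.of_forall fun x =>
      (hg.continuous.comp (Continuous.prodMk_right x)).aestronglyMeasurable
  · exact (hg.continuous.comp (Continuous.prodMk_right x₀)).intervalIntegrable a b
  · exact (hg'_cont.comp (Continuous.prodMk_right x₀)).aestronglyMeasurable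
  · exact Eventually.of_forall fun t ht x hx => (hx t (uIoc_subset_uIcc ht)).le
  · exact Eventually.of_forall fun t _ x _ =>
      ((hg.differentiable one_ne_zero) (x, t)).hasFDerivAt.comp x (hasFDerivAt_prodMk_left x t)

section RayleighPotential

variable {E : Type*} [NormedAddCommGroup E] [InnerProductSpace ℝ E]

noncomputable def rayleighPotential (f : E → E) (w : E) : ℝ :=
  ∫ s in (0 : ℝ)..1, ⟪f (s • w), w⟫

theorem rayleighPotential_smul (f : E → E) (t : ℝ) (v : E) :
    rayleighPotential f (t • v) = ∫ u in (0 : ℝ)..t, ⟪f (u • v), v⟫ := by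
  have h := intervalIntegral.smul_integral_comp_mul_right (a := 0) (b := 1)
    (fun u => ⟪f (u • v), v⟫) t
  simp only [zero_mul, one_mul, smul_eq_mul] at h
  simp only [rayleighPotential, smul_smul, real_inner_smul_right,
    intervalIntegral.integral_const_mul, h]

theorem differentiable_rayleighPotential {f : E → E} (hf : ContDiff ℝ 1 f) :
    Differentiable ℝ (rayleighPotential f) := fun w =>
  (hasFDerivAt_intervalIntegral_of_contDiff
    (g := fun p : E × ℝ => ⟪f (p.2 • p.1), p.1⟫)
    ((hf.comp (contDiff_snd.smul contDiff_fst)).inner ℝ contDiff_fst) 0 1 w).differentiableAt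

theorem fderiv_rayleighPotential_apply_self {f : E → E} (hf : ContDiff ℝ 1 f) (v : E) :
    fderiv ℝ (rayleighPotential f) v v = ⟪f v, v⟫ := by
  have h_chain : HasDerivAt (fun t : ℝ => rayleighPotential f (t • v))
      (fderiv ℝ (rayleighPotential f) v v) 1 := by
    have := ((differentiable_rayleighPotential hf) ((1 : ℝ) • v)).hasFDerivAt.comp_hasDerivAt
      (1 : ℝ) ((hasDerivAt_id (1 : ℝ)).smul_const v)
    simpa [Function.comp_def] using this
  have h_cont : Continuous fun u : ℝ => ⟪f (u • v), v⟫ := by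
    have := hf.continuous
    fun_prop
  have h_ftc : HasDerivAt (fun t : ℝ => rayleighPotential f (t • v)) ⟪f v, v⟫ 1 := by
    simp only [rayleighPotential_smul]
    simpa using (h_cont.integral_hasStrictDerivAt 0 1).hasDerivAt
  exact h_chain.unique h_ftc

end RayleighPotential

/-- For a continuously differentiable force `F` with `R(q,v) = ∫₀¹ ⟨F(q, s·v), v⟩ ds`, the
force `G(q,v) = F(q,v) − ∇ᵥR(q,v)` is gyroscopic: `⟨G(q,v), v⟩ = 0` for all `(q,v)`. -/
theorem force_minus_rayleigh_is_gyroscopic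
    (n : ℕ)
    (F : EuclideanSpace ℝ (Fin n) × EuclideanSpace ℝ (Fin n) → EuclideanSpace ℝ (Fin n))
    (hF : ContDiff ℝ 1 F)
    (R : EuclideanSpace ℝ (Fin n) × EuclideanSpace ℝ (Fin n) → ℝ)
    (hR : ∀ q v : EuclideanSpace ℝ (Fin n),
      R (q, v) = ∫ s in (0:ℝ)..1, ⟪F (q, s • v), v⟫)
    (G : EuclideanSpace ℝ (Fin n) × EuclideanSpace ℝ (Fin n) → EuclideanSpace ℝ (Fin n))
    (hG : ∀ q v : EuclideanSpace ℝ (Fin n),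
      G (q, v) = F (q, v) - gradient (fun w => R (q, w)) v) :
    ∀ q v : EuclideanSpace ℝ (Fin n), ⟪G (q, v), v⟫ = 0 := by
  intro q v
  have hR_q : (fun w => R (q, w)) = rayleighPotential (fun w => F (q, w)) :=
    funext (hR q)
  have hF_q : ContDiff ℝ 1 fun w => F (q, w) := by fun_prop
  rw [hG, inner_sub_left, hR_q, inner_gradient_left, fderiv_rayleighPotential_apply_self hF_q,
    sub_self]
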